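/- Let S be an abstract numeration system and Y ⊆ ℕ^ℕ. Then Y is weakly S-codable if and only if P_v(Y) is S-recognizable for every finite word v of positive integers. -/

import Mathlib

open scoped BigOperators

/-- A language is regular if it is accepted by a DFA with finitely many states. -/
def IsRegularLang {α : Type*} (L : Set (List α)) : Prop :=
  ∃ (σ : Type) (_ : Fintype σ) (M : DFA α σ), ∀ w : List α, w ∈ M.accepts ↔ w ∈ L

/-- Pad a word over `A` to length `M` by prepending the padding symbol `none`. -/
def padOne {A : Type*} (M : ℕ) (w : List A) : List (Option A) :=
  List.replicate (M - w.length) none ++ w.map some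

/-- The padded form of a `d`-tuple of words over `A`, as a word over `(A ∪ {#})^d`. -/
def padTuple {A : Type*} {d : ℕ} (ws : Fin d → List A) : List (Fin d → Option A) :=
  List.ofFn fun j : Fin (Finset.univ.sup fun i : Fin d => (ws i).length) =>
    fun i : Fin d =>
      (padOne (Finset.univ.sup fun i : Fin d => (ws i).length) (ws i)).getD j.val none

/-- An abstract numeration system over the alphabet `A`, encoded by the order isomorphism
`rep : ℕ → L ⊆ A*` enumerating its (infinite) language in increasing order. -/
structure ANS (A : Type*) where
  rep : ℕ → List A
  inj : Function.Injective rep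

/-- A set `Y ⊆ ℕ^d` is `S`-recognizable if the padded representations of its members form
a regular language. -/
def ANS.Recognizable {A : Type*} (S : ANS A) {d : ℕ} (Y : Set (Fin d → ℕ)) : Prop :=
  IsRegularLang { w : List (Fin d → Option A) | ∃ t ∈ Y, w = padTuple fun i => S.rep (t i) }

/-- An ANS is addable if the graph of addition is `S`-recognizable. -/
def ANS.Addable {A : Type*} (S : ANS A) : Prop :=
  S.Recognizable { t : Fin 3 → ℕ | t 0 + t 1 = t 2 }

/-- An ANS is comparable if the relation `≤` is `S`-recognizable. -/
def ANS.Comparable {A : Type*} (S : ANS A) : Prop :=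
  S.Recognizable { t : Fin 2 → ℕ | t 0 ≤ t 1 }

/-- An ANS is regular if `ℕ` (i.e. its language) is `S`-recognizable. -/
def ANS.IsRegularANS {A : Type*} (S : ANS A) : Prop :=
  S.Recognizable (Set.univ : Set (Fin 1 → ℕ))

/-- The unary ANS, with language `0*` ordered by length. -/
def unaryANS : ANS Unit where
  rep := fun n => List.replicate n ()
  inj := fun m n h => by simpa using congrArg List.length h

/-- `x` is `S`-automatic: some DFAO outputs `x n` on input `rep_S n`. -/
def SAutomatic {A C : Type*} (S : ANS A) (x : ℕ → C) : Prop :=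
  ∃ (Q : Type) (_ : Fintype Q) (M : DFA A Q) (τ : Q → C),
    ∀ n : ℕ, τ (M.eval (S.rep n)) = x n

/-- The shift map on one-sided infinite words. -/
def shiftMap {C : Type*} (x : ℕ → C) : ℕ → C := fun n => x (n + 1)

/-- The orbit closure of `x` (closure in the product topology over the discrete alphabet):
`y` belongs to it iff every finite prefix of `y` occurs in `x`. -/
def orbitClosure {C : Type*} (x : ℕ → C) : Set (ℕ → C) :=
  { y | ∀ n : ℕ, ∃ m : ℕ, ∀ i < n, y i = x (m + i) }

/-- A subshift: a shift-invariant subset of `C^ℕ` that is closed in the product topology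
over the discrete alphabet (expressed combinatorially). -/
def IsSubshift {C : Type*} (X : Set (ℕ → C)) : Prop :=
  (∀ x ∈ X, shiftMap x ∈ X) ∧
  ∀ y : ℕ → C, (∀ n : ℕ, ∃ x ∈ X, ∀ i < n, y i = x i) → y ∈ X

/-- The language of a set of infinite words: all finite factors of its elements. -/
def LangOf {C : Type*} (X : Set (ℕ → C)) : Set (List C) :=
  { w | ∃ x ∈ X, ∃ p : ℕ, w = List.ofFn fun i : Fin w.length => x (p + i) }

/-- A word is right special in (the language of) `X` if it has two distinct one-letter
extensions in the language of `X`. -/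
def RightSpecial {C : Type*} (X : Set (ℕ → C)) (w : List C) : Prop :=
  ∃ a b : C, a ≠ b ∧ w ++ [a] ∈ LangOf X ∧ w ++ [b] ∈ LangOf X

/-- The factor complexity of `x`: the number of distinct factors of length `n`. -/
noncomputable def factorComplexity {C : Type*} (x : ℕ → C) (n : ℕ) : ℕ :=
  Set.ncard { w : List C | ∃ p : ℕ, w = List.ofFn fun i : Fin n => x (p + i) }

/-- `T` is a strategy tree witnessing `α ∈ W(X)`: a prefix-closed set of finite words
containing the empty word, in which every word of length `i` has exactly `α i + 1`
one-letter extensions, and all whose infinite branches lie in `X`. -/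
def IsStrategyTree {C : Type*} (X : Set (ℕ → C)) (α : ℕ → ℕ) (T : Set (List C)) : Prop :=
  ([] : List C) ∈ T ∧
  (∀ u v : List C, u ++ v ∈ T → u ∈ T) ∧
  (∀ w ∈ T, Set.ncard { c : C | w ++ [c] ∈ T } = α w.length + 1) ∧
  (∀ y : ℕ → C, (∀ n : ℕ, (List.ofFn fun i : Fin n => y i) ∈ T) → y ∈ X)

/-- The winning shift of `X ⊆ C^ℕ`, a subset of `ℕ^ℕ`. -/
def winningShift {C : Type*} (X : Set (ℕ → C)) : Set (ℕ → ℕ) :=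
  { α | ∃ T : Set (List C), IsStrategyTree X α T }

/-- Membership in the winning set of a set `X` of finite words, defined recursively:
`ε ∈ W(X)` iff `ε ∈ X`, and `a :: α ∈ W(X)` iff there is a set of `a + 1` letters `c`
such that `α` is in the winning set of the left quotient of `X` by `c`. -/
def winningSetMem {C : Type*} : List ℕ → Set (List C) → Prop
  | [], X => [] ∈ X
  | a :: α, X => ∃ S : Finset C, S.card = a + 1 ∧ ∀ c ∈ S, winningSetMem α { w | c :: w ∈ X }

/-- `Σ y = m`: the sum of the letters of `y ∈ ℕ^ℕ` is finite and equals `m`. -/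
def sumEq (y : ℕ → ℕ) (m : ℕ) : Prop :=
  (Function.support y).Finite ∧ ∑ᶠ i, y i = m

/-- `Y ⊆ ℕ^ℕ` has finite coding dimension: the sums `Σ y`, `y ∈ Y`, are uniformly bounded. -/
def FiniteCodingDim (Y : Set (ℕ → ℕ)) : Prop :=
  ∃ d : ℕ, ∀ y ∈ Y, ∀ F : Finset ℕ, ∑ i ∈ F, y i ≤ d

/-- The set `{ν(y) : y ∈ Y, Σy = k} ⊆ ℕᵏ`: nondecreasing `k`-tuples `t` such that the word
whose letter at `j` is the number of occurrences of `j` in `t` belongs to `Y`. -/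
def nuSet (Y : Set (ℕ → ℕ)) (k : ℕ) : Set (Fin k → ℕ) :=
  { t | Monotone t ∧ (fun j => Set.ncard { i : Fin k | t i = j }) ∈ Y }

/-- `Y ⊆ ℕ^ℕ` is weakly `S`-codable if `{ν(y) : y ∈ Y, Σy = k}` is `S`-recognizable for
every `k`. -/
def WeaklySCodable {A : Type*} (S : ANS A) (Y : Set (ℕ → ℕ)) : Prop :=
  ∀ k : ℕ, S.Recognizable (nuSet Y k)

/-- `Y ⊆ ℕ^ℕ` is `S`-codable if it is weakly `S`-codable and has finite coding dimension. -/
def SCodable {A : Type*} (S : ANS A) (Y : Set (ℕ → ℕ)) : Prop :=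
  WeaklySCodable S Y ∧ FiniteCodingDim Y

/-- `P_{111}(Y)`: strictly increasing triples `(a, b, c)` such that the word with letter `1`
exactly at positions `a`, `b`, `c` and `0` elsewhere belongs to `Y`. -/
def P111 (Y : Set (ℕ → ℕ)) : Set (Fin 3 → ℕ) :=
  { t | t 0 < t 1 ∧ t 1 < t 2 ∧
        (fun j => if j = t 0 ∨ j = t 1 ∨ j = t 2 then 1 else 0) ∈ Y }

/-- `P_v(Y)` for a finite word `v` over `ℕ`: strictly increasing tuples `n` such that the
word with letter `v i` at position `n i` and `0` elsewhere belongs to `Y`. -/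
def PvSet (v : List ℕ) (Y : Set (ℕ → ℕ)) : Set (Fin v.length → ℕ) :=
  { n | StrictMono n ∧
        (fun j => ∑ i : Fin v.length, if n i = j then v.get i else 0) ∈ Y }

/-- `X` is sofic: the set of label sequences of right-infinite paths in a finite
edge-labeled graph. -/
def IsSofic {C : Type*} (X : Set (ℕ → C)) : Prop :=
  ∃ (V : Type) (_ : Fintype V) (E : Set (V × C × V)),
    X = { x | ∃ p : ℕ → V, ∀ n : ℕ, (p n, x n, p (n + 1)) ∈ E }

/-- The factor `x[a..b-1]` of an infinite word. -/
def segmentOf {C : Type*} (x : ℕ → C) (a b : ℕ) : List C :=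
  List.ofFn fun i : Fin (b - a) => x (a + i)

/-- `U · V^ω`: infinite words that decompose as a word of `U` followed by infinitely many
nonempty words of `V`. -/
def omegaIter {C : Type*} (U V : Set (List C)) : Set (ℕ → C) :=
  { x | ∃ k : ℕ → ℕ, StrictMono k ∧ segmentOf x 0 (k 0) ∈ U ∧
        ∀ i : ℕ, segmentOf x (k i) (k (i + 1)) ∈ V }

/-- `X ⊆ C^ℕ` is ω-regular: a finite union of sets `U · V^ω` with `U`, `V` regular. -/
def IsOmegaRegular {C : Type*} (X : Set (ℕ → C)) : Prop :=
  ∃ (n : ℕ) (U V : Fin n → Set (List C)),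
    (∀ i, IsRegularLang (U i) ∧ IsRegularLang (V i)) ∧
    X = ⋃ i, omegaIter (U i) (V i)

/-- The words `p₁ = a`, `p_{k+1} = p_k bᵏ p_k` (with `a = false`, `b = true`). -/
def pWord : ℕ → List Bool
  | 0 => []
  | 1 => [false]
  | (k + 2) => pWord (k + 1) ++ List.replicate (k + 1) true ++ pWord (k + 1)

/-- Combinatorial continuity of `φ` on `Y` for product topologies over discrete alphabets:
every finite prefix of `φ y` is determined by a finite prefix of `y`. -/
def ContOn {B C : Type*} (φ : (ℕ → B) → (ℕ → C)) (Y : Set (ℕ → B)) : Prop :=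
  ∀ y ∈ Y, ∀ n : ℕ, ∃ m : ℕ, ∀ y' ∈ Y, (∀ i < m, y' i = y i) → ∀ i < n, φ y' i = φ y i

/-!
A nondecreasing `k`-tuple `t` is the same thing as a composition `c` of `k` together with a
strictly increasing tuple `n` indexed by the blocks of `c`, via `t = n ∘ c.index`; under this
correspondence `t = ν(y)` exactly when `n ∈ P_v(Y)` with `v` the list of block sizes of `c`.
Hence `{ν(y) : y ∈ Y, Σy = k}` is the finite union, over the compositions `c` of `k`, of the
images of `P_v(Y)` under `n ↦ n ∘ c.index`, and conversely `P_v(Y)` consists of the injective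
`n` with `n ∘ c.index` in `{ν(y) : y ∈ Y, Σy = k}`, for `c = v` seen as a composition of `Σ v`.
On padded representations, `n ↦ n ∘ g` acts letter by letter (it copies tracks), so both
directions follow from the closure of regular languages under images and preimages of
letter-to-letter maps, finite unions and intersections; injectivity of `n` is the regular
condition that any two tracks differ at some letter.
-/

open Finset Function

namespace Language

variable {α β : Type*}

theorem isRegular_top : (⊤ : Language α).IsRegular :=
  ⟨Unit, inferInstance, ⟨fun _ _ => (), (), Set.univ⟩, rfl⟩

theorem IsRegular.iInf {ι : Type*} [Fintype ι] {L : ι → Language α}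
    (h : ∀ i, (L i).IsRegular) : (⨅ i, L i).IsRegular := by
  rw [← Finset.inf_univ_eq_iInf]
  exact Finset.inf_induction isRegular_top (fun _ h₁ _ h₂ => h₁.inf h₂) fun i _ => h i

theorem IsRegular.iSup {ι : Type*} [Fintype ι] {L : ι → Language α}
    (h : ∀ i, (L i).IsRegular) : (⨆ i, L i).IsRegular := by
  rw [← Finset.sup_univ_eq_iSup]
  exact Finset.sup_induction (by simpa using isRegular_top.compl) (fun _ h₁ _ h₂ => h₁.add h₂)
    fun i _ => h i

theorem IsRegular.preimage_map (f : α → β) {L : Language β} (h : L.IsRegular) :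
    Language.IsRegular (T := α) (List.map f ⁻¹' L) := by
  obtain ⟨σ, _, M, rfl⟩ := h
  exact ⟨σ, inferInstance, M.comap f, M.accepts_comap f⟩

theorem isRegular_setOf_exists_mem (p : α → Prop) :
    Language.IsRegular (T := α) {w | ∃ a ∈ w, p a} := by
  classical
  refine ⟨Bool, inferInstance, ⟨fun b a => b || decide (p a), false, {true}⟩, ?_⟩
  have key : ∀ (w : List α) (b : Bool),
      (w.foldl (fun b a => b || decide (p a)) b = true) ↔ (b = true ∨ ∃ a ∈ w, p a) := by
    intro w
    induction w with
    | nil => simp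
    | cons a w ih => intro b; simp [ih, or_assoc]
  ext w
  simp only [DFA.mem_accepts, DFA.eval, DFA.evalFrom, Set.mem_singleton_iff, key,
    Bool.false_eq_true, false_or]
  rfl

theorem IsRegular.map (f : α → β) {L : Language α} (h : L.IsRegular) : (map f L).IsRegular := by
  classical
  obtain ⟨σ, _, M, rfl⟩ := h
  -- reading `b`, the automaton guesses a letter `a` with `f a = b` and moves as `M` does on `a`
  let N : NFA β σ := ⟨fun q b => {q' | ∃ a, f a = b ∧ M.step q a = q'}, {M.start}, M.accept⟩
  have key : ∀ (w : List β) (S : Set σ),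
      w ∈ N.acceptsFrom S ↔ ∃ q ∈ S, ∃ u ∈ M.acceptsFrom q, u.map f = w := by
    intro w
    induction w with
    | nil => simp [N, DFA.mem_acceptsFrom, DFA.evalFrom]
    | cons b w ih =>
      intro S
      rw [NFA.cons_mem_acceptsFrom, ih]
      simp only [N, NFA.mem_stepSet, Set.mem_ofPred_eq, DFA.mem_acceptsFrom, DFA.evalFrom,
        exists_exists_and_exists_and_eq_and, List.map_eq_cons_iff]
      aesop
  refine ⟨Set σ, inferInstance, N.toDFA, ?_⟩
  ext w
  rw [NFA.toDFA_correct, NFA.accepts_eq_acceptsFrom_start, key]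
  simp only [N, Set.mem_singleton_iff, exists_eq_left]
  rfl

end Language

theorem List.eq_of_map_apply_eq {ι β : Type*} {w w' : List (ι → β)}
    (hlen : w.length = w'.length) (h : ∀ i, w.map (· i) = w'.map (· i)) : w = w' :=
  List.ext_getElem hlen fun p h₁ h₂ => funext fun i => by
    simpa [h₁, h₂] using congrArg (·[p]?) (h i)

section Padding

variable {A : Type*} {d m : ℕ}

theorem filterMap_id_padOne (M : ℕ) (w : List A) : (padOne M w).filterMap id = w := by
  simp [padOne, List.filterMap_append, List.filterMap_map]

theorem length_padOne {M : ℕ} {w : List A} (h : w.length ≤ M) : (padOne M w).length = M := by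
  simp only [padOne, List.length_append, List.length_replicate, List.length_map]
  omega

theorem length_padTuple (ws : Fin d → List A) :
    (padTuple ws).length = univ.sup fun i => (ws i).length := by
  simp [padTuple]

theorem map_apply_padTuple (ws : Fin d → List A) (i : Fin d) :
    (padTuple ws).map (· i) = padOne (univ.sup fun i => (ws i).length) (ws i) := by
  have hi : (ws i).length ≤ univ.sup fun i => (ws i).length :=
    le_sup (f := fun i => (ws i).length) (mem_univ i)
  refine List.ext_getElem (by simp [length_padTuple, length_padOne hi]) fun p h₁ h₂ => ?_
  simp [padTuple, List.getElem?_eq_getElem h₂]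

theorem filterMap_apply_padTuple (ws : Fin d → List A) (i : Fin d) :
    (padTuple ws).filterMap (· i) = ws i := by
  rw [← filterMap_id_padOne _ (ws i), ← map_apply_padTuple, List.filterMap_map]
  rfl

theorem forall_mem_padTuple_apply_eq_iff (ws : Fin d → List A) (i j : Fin d) :
    (∀ a ∈ padTuple ws, a i = a j) ↔ ws i = ws j := by
  refine ⟨fun h => ?_, fun h => List.map_inj_left.mp ?_⟩
  · rw [← filterMap_apply_padTuple ws i, ← filterMap_apply_padTuple ws j]
    exact List.filterMap_congr fun a ha => h a ha
  · rw [map_apply_padTuple, map_apply_padTuple, h]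

theorem sup_length_comp_of_surjective (ws : Fin m → List A) {g : Fin d → Fin m}
    (hg : Surjective g) :
    (univ.sup fun i => (ws (g i)).length) = univ.sup fun j => (ws j).length := by
  refine le_antisymm (Finset.sup_le fun i _ => le_sup (f := fun j => (ws j).length) (mem_univ _))
    (Finset.sup_le fun j _ => ?_)
  obtain ⟨i, rfl⟩ := hg j
  exact le_sup (f := fun i => (ws (g i)).length) (mem_univ i)

theorem padTuple_comp (ws : Fin m → List A) {g : Fin d → Fin m} (hg : Surjective g) :
    padTuple (ws ∘ g) = (padTuple ws).map (· ∘ g) := by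
  refine List.eq_of_map_apply_eq ?_ fun i => ?_
  · simp [length_padTuple, sup_length_comp_of_surjective ws hg]
  · rw [List.map_map, map_apply_padTuple]
    exact (sup_length_comp_of_surjective ws hg).symm ▸ (map_apply_padTuple ws (g i)).symm

end Padding

namespace ANS

variable {A : Type*} (S : ANS A) {d m : ℕ}

def encode (t : Fin d → ℕ) : List (Fin d → Option A) := padTuple fun i => S.rep (t i)

theorem recognizable_iff_isRegular_image {Y : Set (Fin d → ℕ)} :
    S.Recognizable Y ↔ Language.IsRegular (T := Fin d → Option A) (S.encode '' Y) := by
  have e : ∀ w, w ∈ S.encode '' Y ↔ ∃ t ∈ Y, w = padTuple fun i => S.rep (t i) := fun w => by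
    simp only [Set.mem_image, encode, eq_comm]
  exact ⟨fun ⟨σ, _, M, hM⟩ => ⟨σ, inferInstance, M, Set.ext fun w => (hM w).trans (e w).symm⟩,
    fun ⟨σ, _, M, hM⟩ => ⟨σ, inferInstance, M, fun w => (Set.ext_iff.1 hM w).trans (e w)⟩⟩

theorem encode_comp (t : Fin m → ℕ) {g : Fin d → Fin m} (hg : Surjective g) :
    S.encode (t ∘ g) = (S.encode t).map (· ∘ g) :=
  padTuple_comp (fun j => S.rep (t j)) hg

theorem injective_iff_forall_exists_mem_encode (t : Fin d → ℕ) :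
    Injective t ↔ ∀ p : {p : Fin d × Fin d // p.1 ≠ p.2}, ∃ a ∈ S.encode t, a p.1.1 ≠ a p.1.2 := by
  refine ⟨fun h p => ?_, fun h i j hij => by_contra fun hne => ?_⟩
  · by_contra! hall
    exact p.2 (h (S.inj ((forall_mem_padTuple_apply_eq_iff _ _ _).1 hall)))
  · obtain ⟨a, ha, hne'⟩ := h ⟨(i, j), hne⟩
    exact hne' ((forall_mem_padTuple_apply_eq_iff _ _ _).2 (congrArg S.rep hij) a ha)

theorem exists_encode_of_map_comp_eq {g : Fin d → Fin m} (hg : Surjective g)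
    {w : List (Fin m → Option A)} {t' : Fin d → ℕ} (h : w.map (· ∘ g) = S.encode t') :
    ∃ t, t ∘ g = t' ∧ w = S.encode t := by
  have track : ∀ i, S.rep (t' i) = w.filterMap (· (g i)) := fun i => by
    rw [← filterMap_apply_padTuple (fun i => S.rep (t' i)) i, ← encode, ← h, List.filterMap_map]
    rfl
  have ht : (t' ∘ surjInv hg) ∘ g = t' :=
    funext fun i => S.inj (by simp only [comp_apply, track, surjInv_eq])
  refine ⟨t' ∘ surjInv hg, ht, List.map_injective_iff.2 hg.injective_comp_right ?_⟩
  rw [h, ← encode_comp _ _ hg, ht]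

namespace Recognizable

variable {S}

theorem image_comp {X : Set (Fin m → ℕ)} (hX : S.Recognizable X) {g : Fin d → Fin m}
    (hg : Surjective g) : S.Recognizable ((· ∘ g) '' X) := by
  rw [recognizable_iff_isRegular_image] at hX ⊢
  have e : S.encode '' ((· ∘ g) '' X) = List.map (· ∘ g) '' (S.encode '' X) := by
    simp only [Set.image_image, S.encode_comp _ hg]
  rw [e]
  exact hX.map (· ∘ g)

theorem preimage_comp {Z : Set (Fin d → ℕ)} (hZ : S.Recognizable Z) {g : Fin d → Fin m}
    (hg : Surjective g) : S.Recognizable ((· ∘ g) ⁻¹' Z) := by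
  rw [recognizable_iff_isRegular_image] at hZ ⊢
  have e : S.encode '' ((· ∘ g) ⁻¹' Z) = List.map (· ∘ g) ⁻¹' (S.encode '' Z) := by
    ext w
    constructor
    · rintro ⟨t, ht, rfl⟩
      exact ⟨t ∘ g, ht, S.encode_comp t hg⟩
    · rintro ⟨t', ht', h⟩
      obtain ⟨t, rfl, rfl⟩ := S.exists_encode_of_map_comp_eq hg h.symm
      exact ⟨t, ht', rfl⟩
  rw [e]
  exact hZ.preimage_map (· ∘ g)

theorem sep_injective {X : Set (Fin d → ℕ)} (hX : S.Recognizable X) :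
    S.Recognizable {t ∈ X | Injective t} := by
  rw [recognizable_iff_isRegular_image] at hX ⊢
  have e : S.encode '' {t ∈ X | Injective t} =
      S.encode '' X ∩ ⋂ p : {p : Fin d × Fin d // p.1 ≠ p.2}, {w | ∃ a ∈ w, a p.1.1 ≠ a p.1.2} := by
    ext w
    simp only [Set.mem_image, Set.mem_inter_iff, Set.mem_iInter, Set.mem_ofPred_eq]
    constructor
    · rintro ⟨t, ⟨ht, hinj⟩, rfl⟩
      exact ⟨⟨t, ht, rfl⟩, (S.injective_iff_forall_exists_mem_encode t).1 hinj⟩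
    · rintro ⟨⟨t, ht, rfl⟩, hinj⟩
      exact ⟨t, ⟨ht, (S.injective_iff_forall_exists_mem_encode t).2 hinj⟩, rfl⟩
  rw [e]
  exact hX.inf (Language.IsRegular.iInf fun p => Language.isRegular_setOf_exists_mem _)

end Recognizable

theorem recognizable_iUnion {ι : Type*} [Fintype ι] {X : ι → Set (Fin d → ℕ)}
    (h : ∀ i, S.Recognizable (X i)) : S.Recognizable (⋃ i, X i) := by
  simp only [recognizable_iff_isRegular_image, Set.image_iUnion] at h ⊢
  exact Language.IsRegular.iSup h

end ANS

theorem Monotone.of_comp_of_surjective {α β γ : Type*} [LinearOrder α] [PartialOrder β] [Preorder γ]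
    {f : β → γ} {g : α → β} (hfg : Monotone (f ∘ g)) (hg : Monotone g) (hg' : Surjective g) :
    Monotone f := by
  intro a b hab
  obtain ⟨x, rfl⟩ := hg' a
  obtain ⟨y, rfl⟩ := hg' b
  rcases le_total x y with hxy | hyx
  · exact hfg hxy
  · exact le_of_eq (congrArg f (le_antisymm hab (hg hyx)))

theorem ncard_setOf_eq_card_filter {α : Type*} [Fintype α] (p : α → Prop) [DecidablePred p] :
    {a | p a}.ncard = #{a | p a} := by
  rw [← Set.ncard_coe_finset, coe_filter_univ]

theorem Monotone.eq_of_forall_ncard_fiber_eq {k : ℕ} {α : Type*} [LinearOrder α]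
    {t t' : Fin k → α} (ht : Monotone t) (ht' : Monotone t')
    (h : ∀ x, {i | t i = x}.ncard = {i | t' i = x}.ncard) : t = t' := by
  classical
  refine List.ofFn_injective (List.Perm.eq_of_sortedLE ht.sortedLE_ofFn ht'.sortedLE_ofFn ?_)
  rw [← Multiset.coe_eq_coe, ← Fin.univ_val_map, ← Fin.univ_val_map]
  ext x
  simpa only [Multiset.count_map, ← filter_val, card_val, ncard_setOf_eq_card_filter, eq_comm]
    using h x

namespace Composition

variable {k : ℕ} (c : Composition k)

theorem monotone_index : Monotone c.index := by
  intro i i' hii'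
  by_contra! hlt
  have h₁ := c.lt_sizeUpTo_index_succ i'
  have h₂ := c.sizeUpTo_index_le i
  have h₃ := c.monotone_sizeUpTo (Nat.succ_le_of_lt hlt)
  simp only [Fin.val_succ] at h₁
  simp only [Nat.succ_eq_add_one] at h₃
  omega

theorem surjective_index : Surjective c.index :=
  fun j => ⟨c.embedding j ⟨0, c.one_le_blocksFun j⟩, c.index_embedding _ _⟩

theorem card_filter_index_eq (j : Fin c.length) : #{i | c.index i = j} = c.blocksFun j := by
  classical
  have : ({i | c.index i = j} : Finset (Fin k)) = univ.map (c.embedding j).toEmbedding := by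
    ext i
    simp [eq_comm, ← c.mem_range_embedding_iff']
  rw [this, card_map, card_univ, Fintype.card_fin]

theorem ncard_setOf_comp_index_eq (n : Fin c.length → ℕ) (x : ℕ) :
    {i | n (c.index i) = x}.ncard = ∑ j, if n j = x then c.blocksFun j else 0 := by
  classical
  rw [ncard_setOf_eq_card_filter, card_eq_sum_card_fiberwise (f := c.index) (t := univ)
    fun _ _ => mem_coe.2 (mem_univ _)]
  refine sum_congr rfl fun j _ => ?_
  split_ifs with hj
  · rw [← c.card_filter_index_eq j]
    congr 1
    ext i
    simp only [mem_filter, mem_univ, true_and, and_iff_right_iff_imp]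
    rintro rfl
    exact hj
  · rw [card_eq_zero, filter_eq_empty_iff]
    intro i hi hij
    exact hj (hij ▸ (mem_filter.1 hi).2)

/-- The blocks are the level sets of `t`, in increasing order of their values. -/
theorem exists_strictMono_comp_index {t : Fin k → ℕ} (ht : Monotone t) :
    ∃ (c : Composition k) (n : Fin c.length → ℕ), StrictMono n ∧ t = n ∘ c.index := by
  classical
  set s := univ.image t
  set e := s.orderEmbOfFin rfl
  have sum_comp_e : ∀ f : ℕ → ℕ, ∑ j, f (e j) = ∑ y ∈ s, f y := fun f => by
    rw [← sum_coe_sort s, ← (s.orderIsoOfFin rfl).toEquiv.sum_comp]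
    rfl
  let c : Composition k :=
    { blocks := List.ofFn fun j => #{i | t i = e j}
      blocks_pos := by
        simp only [List.mem_ofFn, forall_exists_index]
        rintro _ j rfl
        obtain ⟨i, -, hi⟩ := mem_image.1 (s.orderEmbOfFin_mem rfl j)
        exact card_pos.2 ⟨i, mem_filter.2 ⟨mem_univ i, hi⟩⟩
      blocks_sum := by
        rw [List.sum_ofFn, sum_comp_e fun y => #{i | t i = y}]
        simpa using (card_eq_sum_card_fiberwise (s := univ) fun i _ =>
          mem_image_of_mem t (mem_univ i)).symm }
  have hlen : c.length = s.card := List.length_ofFn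
  let n : Fin c.length → ℕ := fun j => e (Fin.cast hlen j)
  have hn : StrictMono n := e.strictMono.comp (Fin.cast_strictMono hlen)
  refine ⟨c, n, hn, Monotone.eq_of_forall_ncard_fiber_eq ht (hn.monotone.comp c.monotone_index)
    fun x => ?_⟩
  have hblocks : ∀ j, c.blocksFun j = #{i | t i = n j} := fun j => List.get_ofFn _ j
  calc {i | t i = x}.ncard = if x ∈ s then #{i | t i = x} else 0 := by
        rw [ncard_setOf_eq_card_filter]
        split_ifs with hx
        · rfl
        · exact card_eq_zero.2 (filter_eq_empty_iff.2 fun i _ hi =>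
            hx (hi ▸ mem_image_of_mem t (mem_univ i)))
    _ = ∑ y ∈ s, if y = x then #{i | t i = y} else 0 := by rw [sum_ite_eq']
    _ = ∑ j, if n j = x then c.blocksFun j else 0 := by
        rw [← sum_comp_e, ← (finCongr hlen).sum_comp]
        simp only [hblocks]
        rfl
    _ = {i | (n ∘ c.index) i = x}.ncard := (c.ncard_setOf_comp_index_eq n x).symm

end Composition

theorem pvSet_blocks_eq {k : ℕ} (c : Composition k) (Y : Set (ℕ → ℕ)) :
    PvSet c.blocks Y = {n ∈ (· ∘ c.index) ⁻¹' nuSet Y k | Injective n} := by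
  ext n
  have hcount : (fun x => {i | (n ∘ c.index) i = x}.ncard) =
      fun x => ∑ j, if n j = x then c.blocks.get j else 0 :=
    funext (c.ncard_setOf_comp_index_eq n)
  simp only [PvSet, nuSet, Set.mem_ofPred_eq, Set.mem_preimage, hcount]
  constructor
  · rintro ⟨hn, hY⟩
    exact ⟨⟨hn.monotone.comp c.monotone_index, hY⟩, hn.injective⟩
  · rintro ⟨⟨hmono, hY⟩, hinj⟩
    exact ⟨(hmono.of_comp_of_surjective c.monotone_index c.surjective_index).strictMono_of_injective
      hinj, hY⟩

theorem nuSet_eq_iUnion (Y : Set (ℕ → ℕ)) (k : ℕ) :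
    nuSet Y k = ⋃ c : Composition k, (· ∘ c.index) '' PvSet c.blocks Y := by
  ext t
  simp only [Set.mem_iUnion, Set.mem_image, pvSet_blocks_eq]
  constructor
  · intro ht
    obtain ⟨c, n, hn, rfl⟩ := Composition.exists_strictMono_comp_index ht.1
    exact ⟨c, n, ⟨ht, hn.injective⟩, rfl⟩
  · rintro ⟨c, n, ⟨hn, -⟩, rfl⟩
    exact hn

theorem stmt5_general {A : Type} (S : ANS A) (Y : Set (ℕ → ℕ)) :
    WeaklySCodable S Y ↔
      ∀ v : List ℕ, (∀ a ∈ v, 0 < a) → S.Recognizable (PvSet v Y) := by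
  refine ⟨fun h v hv => ?_, fun h k => ?_⟩
  · let c : Composition v.sum := ⟨v, hv _, rfl⟩
    change S.Recognizable (PvSet c.blocks Y)
    rw [pvSet_blocks_eq]
    exact ((h _).preimage_comp c.surjective_index).sep_injective
  · rw [nuSet_eq_iUnion]
    exact S.recognizable_iUnion fun c =>
      (h c.blocks fun _ => c.blocks_pos).image_comp c.surjective_index

/-- `Y ⊆ ℕ^ℕ` is weakly `S`-codable iff `P_v(Y)` is `S`-recognizable for
every finite word `v` of positive integers. -/
theorem stmt5 {A : Type} [Fintype A] (S : ANS A) (Y : Set (ℕ → ℕ)) :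
    WeaklySCodable S Y ↔
      ∀ v : List ℕ, (∀ a ∈ v, 0 < a) → S.Recognizable (PvSet v Y) :=
  stmt5_general S Y
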